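/- Let y ∈ V^n be a probability vector with positive components, let 1 < d < n−1 with y_1 > y_d and y_{d+1} > y_n (so that K_d(y) is nonempty), and let k be a positive integer. Then for every x ∈ K_d(y): x^{⊗k} ◁ y^{⊗k} if and only if y_d^k < y_1^{k−1} y_{d+1} and y_{d+1}^k > y_d y_n^{k−1}. -/

import Mathlib

noncomputable section

/-- `eSum x l` : the sum of the `l` largest components of `x`. -/
def eSum {n : ℕ} (x : Fin n → ℝ) (l : ℕ) : ℝ :=
  sSup {r | ∃ s : Finset (Fin n), s.card = l ∧ r = ∑ i ∈ s, x i}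

/-- `ESum x l` : the sum of the `l` smallest components of `x`. -/
def ESum {n : ℕ} (x : Fin n → ℝ) (l : ℕ) : ℝ :=
  sInf {r | ∃ s : Finset (Fin n), s.card = l ∧ r = ∑ i ∈ s, x i}

/-- Majorization `x ≺ y` (for vectors with equal total sum):
`e_l(x) ≤ e_l(y)` for all `1 ≤ l ≤ n`. -/
def Maj {n : ℕ} (x y : Fin n → ℝ) : Prop :=
  (∑ i, x i) = (∑ i, y i) ∧ ∀ l : ℕ, 1 ≤ l → l ≤ n → eSum x l ≤ eSum y l

/-- Strict majorization `x ◁ y`: equal total sums and `e_l(x) < e_l(y)` for all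
`1 ≤ l ≤ n - 1`. -/
def SMaj {n : ℕ} (x y : Fin n → ℝ) : Prop :=
  (∑ i, x i) = (∑ i, y i) ∧ ∀ l : ℕ, 1 ≤ l → l + 1 ≤ n → eSum x l < eSum y l

/-- Super-majorization `x ≺ʷ y` : `E_l(x) ≥ E_l(y)` for all `1 ≤ l ≤ n`. -/
def SupMaj {n : ℕ} (x y : Fin n → ℝ) : Prop :=
  ∀ l : ℕ, 1 ≤ l → l ≤ n → ESum y l ≤ ESum x l

/-- Strict super-majorization `x ◁ʷ y` : `E_l(x) > E_l(y)` for all `1 ≤ l ≤ n`. -/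
def SSupMaj {n : ℕ} (x y : Fin n → ℝ) : Prop :=
  ∀ l : ℕ, 1 ≤ l → l ≤ n → ESum y l < ESum x l

/-- Tensor product of two vectors: the vector of all pairwise products. -/
def tensor {m k : ℕ} (x : Fin m → ℝ) (c : Fin k → ℝ) : Fin (m * k) → ℝ :=
  fun i => x (finProdFinEquiv.symm i).1 * c (finProdFinEquiv.symm i).2

/-- `k`-fold tensor power of a vector. -/
def tpow {n : ℕ} (x : Fin n → ℝ) (k : ℕ) : Fin (n ^ k) → ℝ :=
  fun i => ∏ j : Fin k, x (finFunctionFinEquiv.symm i j)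

/-- `V^n` : probability vectors with components in non-increasing order. -/
def Vn (n : ℕ) : Set (Fin n → ℝ) :=
  {x | (∀ i, 0 ≤ x i) ∧ (∑ i, x i) = 1 ∧ Antitone x}

/-- `S(y)` : members of `V^n` majorized by `y`. -/
def Sset {n : ℕ} (y : Fin n → ℝ) : Set (Fin n → ℝ) :=
  {x ∈ Vn n | Maj x y}

/-- `T(y,c)` : members of `V^n` with `x ⊗ c ≺ y ⊗ c`. -/
def Tcat {n k : ℕ} (y : Fin n → ℝ) (c : Fin k → ℝ) : Set (Fin n → ℝ) :=
  {x ∈ Vn n | Maj (tensor x c) (tensor y c)}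

/-- Local uniformity `l_u(c)` : the minimum of the consecutive ratios `c_{i+1}/c_i`. -/
def lu {k : ℕ} (c : Fin k → ℝ) : ℝ :=
  sInf {r | ∃ i : ℕ, ∃ h : i + 1 < k, r = c ⟨i + 1, h⟩ / c ⟨i, Nat.lt_of_succ_lt h⟩}

/-- Global uniformity `g_u(c) = c_k / c_1` (smallest over largest component of a
non-increasingly ordered vector). -/
def gu {k : ℕ} (c : Fin k → ℝ) : ℝ :=
  if h : 0 < k then c ⟨k - 1, Nat.sub_lt h Nat.one_pos⟩ / c ⟨0, h⟩ else 1

/-- Largest component. -/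
def maxc {n : ℕ} (x : Fin n → ℝ) : ℝ := sSup (Set.range x)

/-- Smallest component. -/
def minc {n : ℕ} (x : Fin n → ℝ) : ℝ := sInf (Set.range x)

/-- `c'` is a (contiguous) segment of `c`. -/
def IsSegment {j k : ℕ} (c' : Fin j → ℝ) (c : Fin k → ℝ) : Prop :=
  ∃ (i : ℕ) (_h : i + j ≤ k), ∀ t : Fin j, c' t = c ⟨i + t, by have := t.isLt; omega⟩

/-- The first `d` components of a vector. -/
def take {n : ℕ} (x : Fin n → ℝ) (d : ℕ) (h : d ≤ n) : Fin d → ℝ :=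
  fun i => x ⟨i, Nat.lt_of_lt_of_le i.isLt h⟩

/-- The components of a vector after the first `d` ones. -/
def drop {n : ℕ} (x : Fin n → ℝ) (d : ℕ) : Fin (n - d) → ℝ :=
  fun i => x ⟨d + i, by have := i.isLt; omega⟩

/-- The segment `(c_i, …, c_j)` of `c` (`0`-based indices). -/
def seg {k : ℕ} (c : Fin k → ℝ) (i j : ℕ) (hij : i ≤ j) (hj : j < k) :
    Fin (j - i + 1) → ℝ :=
  fun t => c ⟨i + t, by have := t.isLt; omega⟩

/-- `(c_i, …, c_j)` is a block of the decomposition `[c]_α` of the (positive,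
non-increasingly ordered) vector `c` according to `α`: ratios within the block
exceed `α`, and the ratios at the two boundaries of the block are `≤ α`
(or the block touches an end of `c`). -/
def IsBlock {k : ℕ} (α : ℝ) (c : Fin k → ℝ) (i j : ℕ) : Prop :=
  ∃ (hij : i ≤ j) (hj : j < k),
    (i = 0 ∨ c ⟨i, by omega⟩ / c ⟨i - 1, by omega⟩ ≤ α) ∧
    (j = k - 1 ∨ ∃ hj1 : j + 1 < k, c ⟨j + 1, hj1⟩ / c ⟨j, hj⟩ ≤ α) ∧
    (∀ (t : ℕ) (ht1 : i ≤ t) (ht2 : t < j), α < c ⟨t + 1, by omega⟩ / c ⟨t, by omega⟩)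

/-- `T_k(y)` : states transformable to `y` with a `k`-dimensional catalyst. -/
def Tk {n : ℕ} (k : ℕ) (y : Fin n → ℝ) : Set (Fin n → ℝ) :=
  {x ∈ Vn n | ∃ c : Fin k → ℝ, (∀ i, 0 < c i) ∧ (∑ i, c i) = 1 ∧ Antitone c ∧
    Maj (tensor x c) (tensor y c)}

/-- `M_k(y)` : states `x` with `x^{⊗k} ≺ y^{⊗k}`. -/
def Mk {n : ℕ} (k : ℕ) (y : Fin n → ℝ) : Set (Fin n → ℝ) :=
  {x ∈ Vn n | Maj (tpow x k) (tpow y k)}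

/-- `T(y)` : states transformable to `y` with some catalyst. -/
def Tinf {n : ℕ} (y : Fin n → ℝ) : Set (Fin n → ℝ) :=
  {x ∈ Vn n | ∃ (k : ℕ) (c : Fin k → ℝ), 0 < k ∧ (∀ i, 0 < c i) ∧ (∑ i, c i) = 1 ∧
    Antitone c ∧ Maj (tensor x c) (tensor y c)}

/-- `M(y)` : states `x` with `x^{⊗k} ≺ y^{⊗k}` for some `k ≥ 1`. -/
def Minf {n : ℕ} (y : Fin n → ℝ) : Set (Fin n → ℝ) :=
  {x ∈ Vn n | ∃ k : ℕ, 1 ≤ k ∧ Maj (tpow x k) (tpow y k)}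

/-- `S^λ(y)` : states `x` with `x ≺ʷ λ y`. -/
def Slam {n : ℕ} (lam : ℝ) (y : Fin n → ℝ) : Set (Fin n → ℝ) :=
  {x ∈ Vn n | SupMaj x (fun i => lam * y i)}

/-- `T^λ(y,c)` : states `x` with `x ⊗ c ≺ʷ λ (y ⊗ c)`. -/
def Tlamc {n k : ℕ} (lam : ℝ) (y : Fin n → ℝ) (c : Fin k → ℝ) : Set (Fin n → ℝ) :=
  {x ∈ Vn n | SupMaj (tensor x c) (fun i => lam * tensor y c i)}

/-- `T_k^λ(y)`. -/
def Tklam {n : ℕ} (k : ℕ) (lam : ℝ) (y : Fin n → ℝ) : Set (Fin n → ℝ) :=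
  {x ∈ Vn n | ∃ c : Fin k → ℝ, (∀ i, 0 < c i) ∧ (∑ i, c i) = 1 ∧ Antitone c ∧
    SupMaj (tensor x c) (fun i => lam * tensor y c i)}

/-- `M_k^λ(y)`. -/
def Mklam {n : ℕ} (k : ℕ) (lam : ℝ) (y : Fin n → ℝ) : Set (Fin n → ℝ) :=
  {x ∈ Vn n | SupMaj (tpow x k) (fun i => lam ^ k * tpow y k i)}

/-- `T^λ(y)`. -/
def Tlaminf {n : ℕ} (lam : ℝ) (y : Fin n → ℝ) : Set (Fin n → ℝ) :=
  {x ∈ Vn n | ∃ (k : ℕ) (c : Fin k → ℝ), 0 < k ∧ (∀ i, 0 < c i) ∧ (∑ i, c i) = 1 ∧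
    Antitone c ∧ SupMaj (tensor x c) (fun i => lam * tensor y c i)}

/-- `M^λ(y)`. -/
def Mlaminf {n : ℕ} (lam : ℝ) (y : Fin n → ℝ) : Set (Fin n → ℝ) :=
  {x ∈ Vn n | ∃ k : ℕ, 1 ≤ k ∧ SupMaj (tpow x k) (fun i => lam ^ k * tpow y k i)}

/-- `K_d(y)` : concatenations `x = x' ⊕ x''` with `x' ◁ y'` and `x'' ◁ y''`,
where `y'` is the first-`d` part of `y` and `y''` the rest. -/
def Kd {n : ℕ} (y : Fin n → ℝ) (d : ℕ) (h : d ≤ n) : Set (Fin n → ℝ) :=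
  {x ∈ Vn n | SMaj (take x d h) (take y d h) ∧ SMaj (drop x d) (drop y d)}

/-- `y(d)` : first `d` components equal to `e_d(y)/d`, the last `n-d` equal to
`(1 - e_d(y))/(n-d)`. -/
def yvec {n : ℕ} (y : Fin n → ℝ) (d : ℕ) : Fin n → ℝ :=
  fun i => if (i : ℕ) < d then eSum y d / d else (1 - eSum y d) / (n - d)

/-- `K_d^λ(y)` : states `x ∈ S^λ(y)` with `E_l(x) = λ E_l(y)` iff `l = n - d`. -/
def Kdlam {n : ℕ} (lam : ℝ) (y : Fin n → ℝ) (d : ℕ) : Set (Fin n → ℝ) :=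
  {x ∈ Vn n | SupMaj x (fun i => lam * y i) ∧
    ∀ l : ℕ, 1 ≤ l → l ≤ n → (ESum x l = lam * ESum y l ↔ l = n - d)}


/-!
Write `excess v t = ∑ᵢ (vᵢ - t)⁺`. Since `eSum v l = min_t (l t + excess v t)`, the minimum being
attained at a component of `v`, a vector `u` with the same total as `v` is strictly majorized by
`v` as soon as `excess u ≤ excess v` everywhere, strictly on the range of `u`.

For `x ∈ K_d(y)` the gain `excess y - excess x` is nonnegative, and positive on the open ranges
`(y_d, y_1)` and `(y_n, y_{d+1})` of the two blocks. For positive vectors, telescoping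
`y ⊗ y^{⊗K} → y ⊗ x^{⊗K} → x ⊗ x^{⊗K}` (or through `x ⊗ y^{⊗K}`) shows that the gain at level
`K + 1` and height `c θ` is at least `c` times the gain at level `K` and height `θ`, for every
component `c` of `x` or of `y`. In logarithmic coordinates, positivity of the gain at level `k` on
the range of `x^{⊗k}` thus reduces to covering `(k log y_n, k log y_1)` by sums of `k - 1`
logarithms of components and one point of `(log y_d, log y_1) ∪ (log y_n, log y_{d+1})`; the two
conditions are exactly what makes consecutive boxes of such sums overlap.

Conversely, if `y_d^k ≥ y_1^{k-1} y_{d+1}`, the products of first-block components are the `d^k`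
largest components of `y^{⊗k}` and carry the mass `e_d(y)^k = e_d(x)^k` for `x` as well, so
`e_{d^k}` does not increase strictly; the other condition is the dual statement for the products of
second-block components, which are then the smallest ones.
-/

open Finset

section eSum

variable {N : ℕ}

lemma sum_le_eSum (v : Fin N → ℝ) (s : Finset (Fin N)) : ∑ i ∈ s, v i ≤ eSum v s.card := by
  refine le_csSup ?_ ⟨s, rfl, rfl⟩
  refine ((((univ : Finset (Fin N)).powerset).image fun s => ∑ i ∈ s, v i).bddAbove).mono ?_
  rintro _ ⟨t, -, rfl⟩
  exact mem_image.2 ⟨t, mem_powerset.2 t.subset_univ, rfl⟩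

lemma exists_eSum_eq (v : Fin N → ℝ) {l : ℕ} (hl : l ≤ N) :
    ∃ s : Finset (Fin N), s.card = l ∧ eSum v l = ∑ i ∈ s, v i := by
  obtain ⟨s, -, hs⟩ := exists_subset_card_eq (show l ≤ (univ : Finset (Fin N)).card by simpa)
  set R := {r | ∃ s : Finset (Fin N), s.card = l ∧ r = ∑ i ∈ s, v i}
  have hne : R.Nonempty := ⟨_, s, hs, rfl⟩
  have hfin : R.Finite :=
    (Set.finite_range fun s : Finset (Fin N) => ∑ i ∈ s, v i).subset
      fun _ ⟨s, _, hr⟩ => ⟨s, hr.symm⟩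
  exact hne.csSup_mem hfin

lemma eSum_card_eq_sum_of_le_of_le {v : Fin N → ℝ} {S : Finset (Fin N)} {c : ℝ}
    (hS : ∀ i ∈ S, c ≤ v i) (hSc : ∀ i ∉ S, v i ≤ c) : eSum v S.card = ∑ i ∈ S, v i := by
  refine le_antisymm ?_ (sum_le_eSum v S)
  obtain ⟨T, hT, hTe⟩ := exists_eSum_eq v (by simpa using card_le_univ S)
  have hcard : (T \ S).card = (S \ T).card := by
    have h1 := card_sdiff_add_card_inter T S
    have h2 := card_sdiff_add_card_inter S T
    rw [inter_comm] at h2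
    omega
  have hout : ∑ i ∈ T \ S, v i ≤ ∑ i ∈ S \ T, v i :=
    calc ∑ i ∈ T \ S, v i ≤ (T \ S).card • c :=
          sum_le_card_nsmul _ _ _ fun i hi => hSc i (mem_sdiff.1 hi).2
      _ = (S \ T).card • c := by rw [hcard]
      _ ≤ ∑ i ∈ S \ T, v i := card_nsmul_le_sum _ _ _ fun i hi => hS i (mem_sdiff.1 hi).1
  rw [hTe, ← sum_inter_add_sum_sdiff T S, ← sum_inter_add_sum_sdiff S T, inter_comm]
  linarith

end eSum

section excess

variable {N : ℕ}

def excess (v : Fin N → ℝ) (t : ℝ) : ℝ := ∑ i, max (v i - t) 0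

lemma excess_nonneg (v : Fin N → ℝ) (t : ℝ) : 0 ≤ excess v t :=
  sum_nonneg fun _ _ => le_max_right _ _

lemma excess_eq_sum_filter (v : Fin N → ℝ) (t : ℝ) :
    excess v t = ∑ i ∈ univ.filter (fun i => t < v i), (v i - t) := by
  rw [sum_filter]
  refine sum_congr rfl fun i _ => ?_
  split_ifs with h
  · exact max_eq_left (by linarith)
  · exact max_eq_right (by linarith [not_lt.1 h])

lemma excess_comp_equiv {M : ℕ} (v : Fin N → ℝ) (e : Fin M ≃ Fin N) :
    excess (v ∘ e) = excess v :=
  funext fun t => Equiv.sum_comp e fun i => max (v i - t) 0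

lemma sum_sub_le_excess (v : Fin N → ℝ) (S : Finset (Fin N)) (t : ℝ) :
    ∑ i ∈ S, (v i - t) ≤ excess v t :=
  (sum_le_sum fun _ _ => le_max_left _ _).trans
    (sum_le_sum_of_subset_of_nonneg S.subset_univ fun _ _ _ => le_max_right _ _)

lemma sum_sub_lt_excess (v : Fin N → ℝ) {t : ℝ} {i : Fin N} (hi : v i < t) :
    ∑ j, (v j - t) < excess v t := by
  rw [← add_sum_erase _ _ (mem_univ i)]
  linarith [sum_sub_le_excess v (univ.erase i) t]

lemma eSum_sub_le_excess (v : Fin N → ℝ) {l : ℕ} (hl : l ≤ N) (t : ℝ) :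
    eSum v l - l * t ≤ excess v t := by
  obtain ⟨T, rfl, hT⟩ := exists_eSum_eq v hl
  rw [hT, ← nsmul_eq_mul, ← sum_const, ← sum_sub_distrib]
  exact sum_sub_le_excess v T t

lemma eSum_sub_lt_excess (v : Fin N → ℝ) {l : ℕ} (hl : 1 ≤ l) (hlN : l < N) {t : ℝ}
    (ht : (∀ i, v i < t) ∨ ∀ i, t < v i) : eSum v l - l * t < excess v t := by
  obtain ⟨T, rfl, hT⟩ := exists_eSum_eq v hlN.le
  rw [hT, ← nsmul_eq_mul, ← sum_const, ← sum_sub_distrib]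
  rcases ht with ht | ht
  · calc ∑ i ∈ T, (v i - t) < ∑ _i ∈ T, (0 : ℝ) :=
          sum_lt_sum_of_nonempty (card_pos.1 hl) fun i _ => by linarith [ht i]
      _ ≤ excess v t := by rw [sum_const_zero]; exact excess_nonneg v t
  · obtain ⟨i, hi⟩ : ∃ i, i ∉ T := by
      by_contra! h
      exact hlN.ne (by simpa using congrArg card (eq_univ_iff_forall.2 h))
    have hex : excess v t = ∑ i, (v i - t) :=
      sum_congr rfl fun i _ => max_eq_left (by linarith [ht i])
    rw [hex]
    exact sum_lt_sum_of_subset T.subset_univ (mem_univ i) hi (by linarith [ht i])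
      fun j _ _ => by linarith [ht j]

/-- The witness is the largest value of `v` outside an optimal `l`-set. -/
lemma exists_eSum_eq_excess (v : Fin N → ℝ) {l : ℕ} (hl : l < N) :
    ∃ θ, eSum v l = l * θ + excess v θ := by
  obtain ⟨T, rfl, hT⟩ := exists_eSum_eq v hl.le
  obtain ⟨b, hbT, hb⟩ := exists_max_image Tᶜ v <| by
    rw [← card_pos, card_compl, Fintype.card_fin]; omega
  have hbT' : b ∉ T := mem_compl.1 hbT
  have hswap : ∀ a ∈ T, v b ≤ v a := by
    intro a ha
    by_contra! hab
    have hcard : (insert b (T.erase a)).card = T.card := by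
      rw [card_insert_of_notMem (fun h => hbT' (mem_of_mem_erase h)), card_erase_of_mem ha]
      have := card_pos.2 ⟨a, ha⟩
      omega
    have := sum_le_eSum v (insert b (T.erase a))
    rw [hcard, sum_insert (fun h => hbT' (mem_of_mem_erase h)), hT,
      ← add_sum_erase T v ha] at this
    linarith
  refine ⟨v b, ?_⟩
  have hex : excess v (v b) = ∑ i ∈ T, (v i - v b) := by
    rw [excess, ← sum_subset T.subset_univ fun i _ hi => max_eq_right
      (by linarith [hb i (mem_compl.2 hi)])]
    exact sum_congr rfl fun i hi => max_eq_left (by linarith [hswap i hi])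
  rw [hT, hex, sum_sub_distrib, sum_const, nsmul_eq_mul]
  ring

end excess

section SMaj

variable {N : ℕ} {u v : Fin N → ℝ}

lemma not_SMaj_of_le_of_le {S : Finset (Fin N)} {c : ℝ} (hS₁ : 1 ≤ S.card) (hS₂ : S.card < N)
    (hS : ∀ i ∈ S, c ≤ v i) (hSc : ∀ i ∉ S, v i ≤ c) (hsum : ∑ i ∈ S, v i ≤ ∑ i ∈ S, u i) :
    ¬ SMaj u v := fun h => by
  have := h.2 S.card hS₁ hS₂
  rw [eSum_card_eq_sum_of_le_of_le hS hSc] at this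
  linarith [sum_le_eSum u S]

lemma SMaj.head_lt (h : SMaj u v) (hv : Antitone v) (hN : 1 < N) :
    u ⟨0, by omega⟩ < v ⟨0, by omega⟩ := by
  have hv0 := eSum_card_eq_sum_of_le_of_le (v := v) (S := {⟨0, by omega⟩}) (c := v ⟨0, by omega⟩)
    (fun i hi => by rw [mem_singleton.1 hi]) fun i _ => hv (Fin.le_def.2 (Nat.zero_le _))
  have hu0 := sum_le_eSum u {⟨0, by omega⟩}
  simp only [card_singleton, sum_singleton] at hv0 hu0
  linarith [h.2 1 le_rfl hN]

lemma SMaj.last_lt (h : SMaj u v) (hv : Antitone v) (hN : 1 < N) :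
    v ⟨N - 1, by omega⟩ < u ⟨N - 1, by omega⟩ := by
  set last : Fin N := ⟨N - 1, by omega⟩
  have hcard : (univ.erase last).card = N - 1 := by rw [card_erase_of_mem (mem_univ _)]; simp
  have hv' := eSum_card_eq_sum_of_le_of_le (v := v) (S := univ.erase last) (c := v last)
    (fun i _ => hv (Fin.le_def.2 (by simp [last]; omega)))
    fun i hi => by rw [not_not.1 (fun h => hi (mem_erase.2 ⟨h, mem_univ _⟩))]
  have hu' := sum_le_eSum u (univ.erase last)
  rw [hcard] at hv' hu'
  have := h.2 (N - 1) (by omega) (by omega)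
  linarith [add_sum_erase univ u (mem_univ last), add_sum_erase univ v (mem_univ last), h.1]

/-- The last two cases are the levels that no component, resp. every component, of `u` exceeds. -/
lemma SMaj.excess_lt_or_eq (h : SMaj u v) (t : ℝ) :
    excess u t < excess v t ∨ excess u t = 0 ∨ excess u t = ∑ i, (v i - t) := by
  set S := univ.filter fun i => t < u i
  have hex : excess u t = ∑ i ∈ S, u i - S.card * t := by
    rw [excess_eq_sum_filter, sum_sub_distrib, sum_const, nsmul_eq_mul]
  by_cases h0 : S.card = 0
  · rw [card_eq_zero.1 h0] at hex
    simp [hex]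
  by_cases hN : S.card = N
  · rw [eq_univ_of_card S (by simpa using hN), card_univ, Fintype.card_fin, h.1] at hex
    simp [hex, sum_sub_distrib]
  left
  calc excess u t ≤ eSum u S.card - S.card * t := by rw [hex]; linarith [sum_le_eSum u S]
    _ < eSum v S.card - S.card * t := by
        have := h.2 S.card (by omega) (by have := card_le_univ S; simp at this; omega)
        linarith
    _ ≤ excess v t := eSum_sub_le_excess v (by simpa using card_le_univ S) t

lemma SMaj.excess_le (h : SMaj u v) (t : ℝ) : excess u t ≤ excess v t := by
  rcases h.excess_lt_or_eq t with h' | h' | h'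
  · exact h'.le
  · exact h' ▸ excess_nonneg v t
  · exact h' ▸ sum_sub_le_excess v univ t

lemma SMaj.excess_lt (h : SMaj u v) {t : ℝ} (hlo : ∃ i, v i < t) (hhi : ∃ i, t < v i) :
    excess u t < excess v t := by
  obtain ⟨i, hi⟩ := hlo
  obtain ⟨j, hj⟩ := hhi
  rcases h.excess_lt_or_eq t with h' | h' | h'
  · exact h'
  · rw [h']
    have := sum_sub_le_excess v {j} t
    rw [sum_singleton] at this
    linarith
  · exact h' ▸ sum_sub_lt_excess v hi

lemma SMaj_of_excess_lt (hsum : ∑ i, u i = ∑ i, v i) (hle : ∀ t, excess u t ≤ excess v t)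
    (hlt : ∀ t, (∃ i, u i ≤ t) → (∃ i, t ≤ u i) → excess u t < excess v t) : SMaj u v := by
  refine ⟨hsum, fun l hl hlN => ?_⟩
  obtain ⟨θ, hθ⟩ := exists_eSum_eq_excess v hlN
  by_cases hr : (∃ i, u i ≤ θ) ∧ ∃ i, θ ≤ u i
  · linarith [eSum_sub_le_excess u (l := l) (by omega) θ, hlt θ hr.1 hr.2]
  · have hout : (∀ i, u i < θ) ∨ ∀ i, θ < u i := by
      rcases not_and_or.1 hr with h | h <;> push Not at h
      exacts [Or.inr h, Or.inl h]
    linarith [eSum_sub_lt_excess u hl hlN hout, hle θ]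

end SMaj

section tensor

variable {a b : ℕ}

lemma sum_max_mul_sub (w : Fin b → ℝ) {c : ℝ} (hc : 0 < c) (θ : ℝ) :
    ∑ j, max (c * w j - θ) 0 = c * excess w (θ / c) := by
  rw [excess, mul_sum]
  refine sum_congr rfl fun j _ => ?_
  rw [mul_max_of_nonneg _ _ hc.le, mul_zero, mul_sub, mul_div_cancel₀ _ hc.ne']

lemma excess_tensor (u : Fin a → ℝ) (w : Fin b → ℝ) (θ : ℝ) :
    excess (tensor u w) θ = ∑ i, ∑ j, max (u i * w j - θ) 0 := by
  rw [excess, ← Equiv.sum_comp finProdFinEquiv, Fintype.sum_prod_type]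
  simp [tensor]

lemma excess_tensor_eq_sum_left {u : Fin a → ℝ} (hu : ∀ i, 0 < u i) (w : Fin b → ℝ) (θ : ℝ) :
    excess (tensor u w) θ = ∑ i, u i * excess w (θ / u i) := by
  rw [excess_tensor]
  exact sum_congr rfl fun i _ => sum_max_mul_sub w (hu i) θ

lemma excess_tensor_eq_sum_right (u : Fin a → ℝ) {w : Fin b → ℝ} (hw : ∀ j, 0 < w j) (θ : ℝ) :
    excess (tensor u w) θ = ∑ j, w j * excess u (θ / w j) := by
  rw [excess_tensor, sum_comm]
  refine sum_congr rfl fun j _ => ?_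
  simp_rw [mul_comm (u _) (w j)]
  exact sum_max_mul_sub u (hw j) θ

variable {u u' : Fin a → ℝ} {w w' : Fin b → ℝ}

/-- Telescoping through `u' ⊗ w`, resp. through `u ⊗ w'`. -/
lemma excess_tensor_sub_eq (hu : ∀ i, 0 < u i) (hu' : ∀ i, 0 < u' i) (hw : ∀ j, 0 < w j)
    (hw' : ∀ j, 0 < w' j) (θ : ℝ) :
    (excess (tensor u' w') θ - excess (tensor u w) θ =
      ∑ i, u' i * (excess w' (θ / u' i) - excess w (θ / u' i)) +
        ∑ j, w j * (excess u' (θ / w j) - excess u (θ / w j))) ∧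
    (excess (tensor u' w') θ - excess (tensor u w) θ =
      ∑ j, w' j * (excess u' (θ / w' j) - excess u (θ / w' j)) +
        ∑ i, u i * (excess w' (θ / u i) - excess w (θ / u i))) := by
  simp only [mul_sub, sum_sub_distrib]
  constructor
  · linarith [excess_tensor_eq_sum_left hu' w' θ, excess_tensor_eq_sum_left hu' w θ,
      excess_tensor_eq_sum_right u' hw θ, excess_tensor_eq_sum_right u hw θ]
  · linarith [excess_tensor_eq_sum_right u' hw' θ, excess_tensor_eq_sum_right u hw' θ,
      excess_tensor_eq_sum_left hu w' θ, excess_tensor_eq_sum_left hu w θ]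

lemma excess_tensor_le (hu : ∀ i, 0 < u i) (hu' : ∀ i, 0 < u' i) (hw : ∀ j, 0 < w j)
    (hw' : ∀ j, 0 < w' j) (huu : ∀ t, excess u t ≤ excess u' t)
    (hww : ∀ t, excess w t ≤ excess w' t) (θ : ℝ) :
    excess (tensor u w) θ ≤ excess (tensor u' w') θ := by
  have h := (excess_tensor_sub_eq hu hu' hw hw' θ).1
  have h₁ := sum_nonneg fun i (_ : i ∈ univ) =>
    mul_nonneg (hu' i).le (sub_nonneg.2 (hww (θ / u' i)))
  have h₂ := sum_nonneg fun j (_ : j ∈ univ) =>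
    mul_nonneg (hw j).le (sub_nonneg.2 (huu (θ / w j)))
  linarith

lemma le_excess_tensor_sub (hu : ∀ i, 0 < u i) (hu' : ∀ i, 0 < u' i) (hw : ∀ j, 0 < w j)
    (hw' : ∀ j, 0 < w' j) (huu : ∀ t, excess u t ≤ excess u' t)
    (hww : ∀ t, excess w t ≤ excess w' t) {c : ℝ} (hc : c ∈ Set.range u ∪ Set.range u') (s : ℝ) :
    c * (excess w' s - excess w s) ≤
      excess (tensor u' w') (c * s) - excess (tensor u w) (c * s) := by
  obtain ⟨h₁, h₂⟩ := excess_tensor_sub_eq hu hu' hw hw' (c * s)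
  rcases hc with ⟨i, rfl⟩ | ⟨i, rfl⟩
  · have hterm := single_le_sum (fun k (_ : k ∈ univ) =>
      mul_nonneg (hu k).le (sub_nonneg.2 (hww (u i * s / u k)))) (mem_univ i)
    have hrest := sum_nonneg fun j (_ : j ∈ univ) =>
      mul_nonneg (hw' j).le (sub_nonneg.2 (huu (u i * s / w' j)))
    rw [mul_div_cancel_left₀ _ (hu i).ne'] at hterm
    linarith
  · have hterm := single_le_sum (fun k (_ : k ∈ univ) =>
      mul_nonneg (hu' k).le (sub_nonneg.2 (hww (u' i * s / u' k)))) (mem_univ i)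
    have hrest := sum_nonneg fun j (_ : j ∈ univ) =>
      mul_nonneg (hw j).le (sub_nonneg.2 (huu (u' i * s / w j)))
    rw [mul_div_cancel_left₀ _ (hu' i).ne'] at hterm
    linarith

end tensor

section tpow

variable {n : ℕ}

lemma tpow_finFunctionFinEquiv (v : Fin n → ℝ) {k : ℕ} (g : Fin k → Fin n) :
    tpow v k (finFunctionFinEquiv g) = ∏ j, v (g j) := by
  simp [tpow]

lemma excess_tpow_one (v : Fin n → ℝ) : excess (tpow v 1) = excess v := by
  rw [← excess_comp_equiv v (finFunctionFinEquiv.symm.trans (Equiv.funUnique (Fin 1) (Fin n)))]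
  congr 1
  funext i
  simp [tpow]

lemma excess_tpow_succ (v : Fin n → ℝ) (K : ℕ) :
    excess (tpow v (K + 1)) = excess (tensor v (tpow v K)) := by
  rw [← excess_comp_equiv (tpow v (K + 1)) <| finProdFinEquiv.symm.trans <|
    (Equiv.prodCongr (Equiv.refl _) finFunctionFinEquiv.symm).trans <|
    (Fin.consEquiv fun _ => Fin n).trans finFunctionFinEquiv]
  congr 1
  funext i
  simp [tpow, tensor, Fin.prod_univ_succ]

lemma tpow_pos {v : Fin n → ℝ} (hv : ∀ i, 0 < v i) (k : ℕ) (m : Fin (n ^ k)) :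
    0 < tpow v k m :=
  prod_pos fun _ _ => hv _

lemma pow_le_tpow {v : Fin n → ℝ} {k : ℕ} {a : ℝ} (ha : 0 ≤ a) {m : Fin (n ^ k)}
    (h : ∀ j, a ≤ v (finFunctionFinEquiv.symm m j)) : a ^ k ≤ tpow v k m := by
  simpa [tpow] using prod_le_prod (s := univ) (fun _ _ => ha) fun j _ => h j

lemma tpow_le_pow {v : Fin n → ℝ} (hv : ∀ i, 0 ≤ v i) {k : ℕ} {a : ℝ} {m : Fin (n ^ k)}
    (h : ∀ j, v (finFunctionFinEquiv.symm m j) ≤ a) : tpow v k m ≤ a ^ k := by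
  simpa [tpow] using prod_le_prod (s := univ) (fun j _ => hv _) fun j _ => h j

lemma sum_tpow_map_piFinset (v : Fin n → ℝ) (k : ℕ) (S : Finset (Fin n)) :
    ∑ m ∈ (Fintype.piFinset fun _ : Fin k => S).map finFunctionFinEquiv.toEmbedding, tpow v k m =
      (∑ i ∈ S, v i) ^ k := by
  rw [sum_map, ← Fin.prod_const k (∑ i ∈ S, v i), prod_univ_sum]
  exact sum_congr rfl fun g _ => tpow_finFunctionFinEquiv v g

lemma sum_tpow (v : Fin n → ℝ) (k : ℕ) : ∑ m, tpow v k m = (∑ i, v i) ^ k := by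
  simpa [Fintype.piFinset_univ, map_univ_equiv] using sum_tpow_map_piFinset v k univ

variable {x y : Fin n → ℝ}

lemma excess_tpow_le (hx : ∀ i, 0 < x i) (hy : ∀ i, 0 < y i)
    (hxy : ∀ t, excess x t ≤ excess y t) (K : ℕ) (θ : ℝ) :
    excess (tpow x K) θ ≤ excess (tpow y K) θ := by
  induction K generalizing θ with
  | zero => simp [excess, tpow]
  | succ K ih =>
    rw [excess_tpow_succ, excess_tpow_succ]
    exact excess_tensor_le hx hy (tpow_pos hx K) (tpow_pos hy K) hxy ih θ

lemma le_excess_tpow_succ_sub (hx : ∀ i, 0 < x i) (hy : ∀ i, 0 < y i)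
    (hxy : ∀ t, excess x t ≤ excess y t) {c : ℝ} (hc : c ∈ Set.range x ∪ Set.range y)
    (K : ℕ) (s : ℝ) :
    c * (excess (tpow y K) s - excess (tpow x K) s) ≤
      excess (tpow y (K + 1)) (c * s) - excess (tpow x (K + 1)) (c * s) := by
  rw [excess_tpow_succ, excess_tpow_succ]
  exact le_excess_tensor_sub hx hy (tpow_pos hx K) (tpow_pos hy K) hxy
    (excess_tpow_le hx hy hxy K) hc s

end tpow

section sumset

open scoped Pointwise

variable {F : Set ℝ}

lemma nsmul_inter_Ioo_nonempty {L c R : ℝ} (hF : {L, c, R} ⊆ F) (hLc : L < c) (hcR : c < R) :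
    ∀ (m : ℕ) {l r : ℝ}, l < m * R → m * L < r → (0 < m → R - L ≤ r - l) →
      (m • F ∩ Set.Ioo l r).Nonempty := by
  intro m
  induction m with
  | zero =>
    intro l r hl hr _
    exact ⟨0, by simp [Set.mem_zero], by simpa using hl, by simpa using hr⟩
  | succ m ih =>
    intro l r hl hr hlen
    push_cast at hl hr
    have hlen := hlen m.succ_pos
    have step : ∀ f ∈ F, (m • F ∩ Set.Ioo (l - f) (r - f)).Nonempty →
        ((m + 1) • F ∩ Set.Ioo l r).Nonempty := by
      rintro f hf ⟨s, hs, hsl, hsr⟩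
      exact ⟨s + f, succ_nsmul F m ▸ Set.add_mem_add hs hf, by linarith, by linarith⟩
    by_cases hR : m * L + R < r
    · exact step R (hF (by simp)) (ih (by linarith) (by linarith) fun _ => by linarith)
    by_cases hL : l < m * R + L
    · exact step L (hF (by simp)) (ih (by linarith) (by linarith) fun _ => by linarith)
    obtain rfl : m = 0 := by
      by_contra hm
      have : (1 : ℝ) ≤ m := by exact_mod_cast Nat.one_le_iff_ne_zero.2 hm
      nlinarith
    simp only [Nat.cast_zero, zero_mul, zero_add, not_lt] at hL hR
    exact ⟨c, by simpa using hF (by simp), by linarith, by linarith⟩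

lemma mem_nsmul_add_Ioo {L₁ c₁ R₁ L₂ c₂ R₂ : ℝ} (hF₁ : {L₁, c₁, R₁} ⊆ F)
    (hF₂ : {L₂, c₂, R₂} ⊆ F) (h₁ : L₁ < c₁ ∧ c₁ < R₁) (h₂ : L₂ < c₂ ∧ c₂ < R₂) {a b : ℕ}
    {θ : ℝ} (hlo : (a + 1) * L₁ + b * L₂ < θ) (hhi : θ < (a + 1) * R₁ + b * R₂)
    (hlen : 0 < b → R₂ - L₂ ≤ (a + 1) * (R₁ - L₁)) :
    θ ∈ (a + b) • F + Set.Ioo L₁ R₁ := by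
  obtain ⟨s₂, hs₂, hs₂l, hs₂r⟩ := nsmul_inter_Ioo_nonempty hF₂ h₂.1 h₂.2 b
    (l := θ - (a + 1) * R₁) (r := θ - (a + 1) * L₁) (by linarith) (by linarith)
    fun hb => by linarith [hlen hb]
  obtain ⟨s₁, hs₁, hs₁l, hs₁r⟩ := nsmul_inter_Ioo_nonempty hF₁ h₁.1 h₁.2 a
    (l := θ - s₂ - R₁) (r := θ - s₂ - L₁) (by linarith) (by linarith) fun _ => by linarith
  refine Set.mem_add.2 ⟨s₁ + s₂, add_nsmul F a b ▸ Set.add_mem_add hs₁ hs₂, θ - s₁ - s₂,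
    ⟨by linarith, by linarith⟩, by ring⟩

lemma sub_lt_nat_mul_add_nat_mul {A B C D : ℝ} {p q : ℕ} (h₁ : B - C < (p + q) * (A - B))
    (h₂ : B - C < (p + q) * (C - D)) : B - C < p * (A - B) + q * (C - D) := by
  rcases Nat.eq_zero_or_pos (p + q) with h | h
  · obtain ⟨rfl, rfl⟩ : p = 0 ∧ q = 0 := by omega
    simpa using h₁
  · have hpq : (0 : ℝ) < p + q := by exact_mod_cast h
    have hp : (0 : ℝ) ≤ p := p.cast_nonneg
    have hq : (0 : ℝ) ≤ q := q.cast_nonneg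
    nlinarith [mul_nonneg hp (sub_nonneg.2 h₁.le), mul_nonneg hq (sub_nonneg.2 h₂.le),
      mul_lt_mul_of_pos_left h₁ hpq, mul_lt_mul_of_pos_left h₂ hpq]

/-- The two conditions make consecutive boxes `j • (B, A) + i • (D, C)` overlap; take the
largest `j` whose box starts below `θ`. -/
lemma exists_add_eq_mem_box {A B C D θ : ℝ} (m : ℕ) (h₁ : (m + 1) * B < m * A + C)
    (h₂ : B + m * D < (m + 1) * C) (hθD : (m + 1) * D < θ) (hθA : θ < (m + 1) * A) :
    ∃ j i : ℕ, j + i = m + 1 ∧ j * B + i * D < θ ∧ θ < j * A + i * C := by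
  let P : ℕ → Prop := fun j => (j : ℝ) * B + ((m + 1 - j : ℕ) : ℝ) * D < θ
  set j := Nat.findGreatest P (m + 1)
  have hjm : j ≤ m + 1 := Nat.findGreatest_le _
  obtain ⟨i, hji⟩ : ∃ i, j + i = m + 1 := ⟨m + 1 - j, by omega⟩
  have hi : ((m + 1 - j : ℕ) : ℝ) = i := by rw [← hji]; simp
  have hjlo : (j : ℝ) * B + i * D < θ := by
    rw [← hi]
    exact Nat.findGreatest_spec (P := P) (m := 0) (Nat.zero_le _) (by simp [P]; linarith)
  refine ⟨j, i, hji, hjlo, ?_⟩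
  have hji' : (j : ℝ) + i = m + 1 := by exact_mod_cast hji
  rcases Nat.eq_zero_or_pos i with rfl | hi0
  · simp only [Nat.cast_zero, add_zero, zero_mul] at hji' ⊢
    rw [hji']
    linarith
  obtain ⟨i', rfl⟩ := Nat.exists_eq_add_of_lt hi0
  have hnext : ¬ P (j + 1) := Nat.findGreatest_is_greatest (Nat.lt_succ_self j) (by omega)
  simp only [P, not_lt, show m + 1 - (j + 1) = i' by omega] at hnext
  have hm : (j : ℝ) + i' = m := by push_cast at hji'; linarith
  have := sub_lt_nat_mul_add_nat_mul (p := j) (q := i') (A := A) (B := B) (C := C) (D := D)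
    (by rw [hm]; linarith) (by rw [hm]; linarith)
  push_cast at hnext ⊢
  nlinarith

/-- The continuous coordinate is taken in the longer of `(B, A)` and `(D, C)`. -/
lemma Ioo_subset_nsmul_add {A B b C D c : ℝ} (hF : {A, B, b, C, D, c} ⊆ F) (hBb : B < b)
    (hbA : b < A) (hDc : D < c) (hcC : c < C) (m : ℕ) (h₁ : (m + 1) * B < m * A + C)
    (h₂ : B + m * D < (m + 1) * C) :
    Set.Ioo ((m + 1) * D) ((m + 1) * A) ⊆ m • F + (Set.Ioo B A ∪ Set.Ioo D C) := by
  rintro θ ⟨hθD, hθA⟩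
  have hup : {B, b, A} ⊆ F := fun z hz => hF (by simp at hz ⊢; tauto)
  have hdown : {D, c, C} ⊆ F := fun z hz => hF (by simp at hz ⊢; tauto)
  obtain ⟨j, i, hji, hjlo, hjhi⟩ := exists_add_eq_mem_box m h₁ h₂ hθD hθA
  have hji' : (j : ℝ) + i = m + 1 := by exact_mod_cast hji
  rcases le_or_gt (C - D) (A - B) with hCD | hCD
  · rcases Nat.eq_zero_or_pos j with rfl | hj0
    · simp only [Nat.cast_zero, zero_add, zero_mul] at hji' hjhi
      have := mem_nsmul_add_Ioo (a := m) (b := 0) hdown hup ⟨hDc, hcC⟩ ⟨hBb, hbA⟩ (θ := θ)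
        (by simpa using hθD) (by rw [hji'] at hjhi; simpa using hjhi) (by simp)
      exact Set.add_subset_add_left Set.subset_union_right (by simpa using this)
    · obtain ⟨a, rfl⟩ := Nat.exists_eq_add_of_lt hj0
      have := mem_nsmul_add_Ioo (a := a) (b := i) hup hdown ⟨hBb, hbA⟩ ⟨hDc, hcC⟩ (θ := θ)
        (by push_cast at hjlo; linarith) (by push_cast at hjhi; linarith)
        fun _ => by nlinarith [(a.cast_nonneg : (0 : ℝ) ≤ a)]
      rw [show a + i = m by omega] at this
      exact Set.add_subset_add_left Set.subset_union_left this
  · rcases Nat.eq_zero_or_pos i with rfl | hi0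
    · simp only [Nat.cast_zero, add_zero, zero_mul] at hji' hjlo
      have := mem_nsmul_add_Ioo (a := m) (b := 0) hup hdown ⟨hBb, hbA⟩ ⟨hDc, hcC⟩ (θ := θ)
        (by rw [hji'] at hjlo; simpa using hjlo) (by simpa using hθA) (by simp)
      exact Set.add_subset_add_left Set.subset_union_left (by simpa using this)
    · obtain ⟨a, rfl⟩ := Nat.exists_eq_add_of_lt hi0
      have := mem_nsmul_add_Ioo (a := a) (b := j) hdown hup ⟨hDc, hcC⟩ ⟨hBb, hbA⟩ (θ := θ)
        (by push_cast at hjlo; linarith) (by push_cast at hjhi; linarith)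
        fun _ => by nlinarith [(a.cast_nonneg : (0 : ℝ) ≤ a)]
      rw [show a + j = m by omega] at this
      exact Set.add_subset_add_left Set.subset_union_right this

end sumset

section gaps

open scoped Pointwise

variable {n : ℕ} {x y : Fin n → ℝ}

lemma excess_tpow_lt_of_mem (hx : ∀ i, 0 < x i) (hy : ∀ i, 0 < y i)
    (hxy : ∀ t, excess x t ≤ excess y t) (m : ℕ) {s : ℝ}
    (hs : s ∈ m • (Real.log '' (Set.range x ∪ Set.range y)) +
      {t | excess x (Real.exp t) < excess y (Real.exp t)}) :
    excess (tpow x (m + 1)) (Real.exp s) < excess (tpow y (m + 1)) (Real.exp s) := by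
  induction m generalizing s with
  | zero =>
    rw [zero_nsmul, zero_add] at hs
    simpa [excess_tpow_one] using hs
  | succ m ih =>
    rw [succ_nsmul', add_assoc] at hs
    obtain ⟨_, ⟨c, hc, rfl⟩, t, ht, rfl⟩ := Set.mem_add.1 hs
    have hc0 : 0 < c := by rcases hc with ⟨i, rfl⟩ | ⟨i, rfl⟩ <;> simp [hx, hy]
    rw [Real.exp_add, Real.exp_log hc0]
    have := le_excess_tpow_succ_sub hx hy hxy hc (m + 1) (Real.exp t)
    nlinarith [ih ht]

lemma excess_tpow_lt (hx : ∀ i, 0 < x i) (hy : ∀ i, 0 < y i)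
    (hxy : ∀ t, excess x t ≤ excess y t) {a β b γ δ c : ℝ}
    (hmem : {a, β, b, γ, δ, c} ⊆ Set.range x ∪ Set.range y) (hβb : β < b) (hba : b < a)
    (hδc : δ < c) (hcγ : c < γ)
    (hgap : ∀ t, (β < t ∧ t < a) ∨ (δ < t ∧ t < γ) → excess x t < excess y t) (m : ℕ)
    (h₁ : β ^ (m + 1) < a ^ m * γ) (h₂ : β * δ ^ m < γ ^ (m + 1)) {θ : ℝ}
    (hθδ : δ ^ (m + 1) < θ) (hθa : θ < a ^ (m + 1)) :
    excess (tpow x (m + 1)) θ < excess (tpow y (m + 1)) θ := by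
  have hpos : ∀ z ∈ ({a, β, b, γ, δ, c} : Set ℝ), 0 < z := fun z hz => by
    rcases hmem hz with ⟨i, rfl⟩ | ⟨i, rfl⟩
    exacts [hx i, hy i]
  have ha := hpos a (by simp)
  have hβ := hpos β (by simp)
  have hγ := hpos γ (by simp)
  have hδ := hpos δ (by simp)
  have hθ : 0 < θ := (pow_pos hδ _).trans hθδ
  have hF : {Real.log a, Real.log β, Real.log b, Real.log γ, Real.log δ, Real.log c} ⊆
      Real.log '' (Set.range x ∪ Set.range y) := by
    simpa [Set.image_insert_eq] using Set.image_mono (f := Real.log) hmem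
  have hgap' : ∀ t ∈ Set.Ioo (Real.log β) (Real.log a) ∪ Set.Ioo (Real.log δ) (Real.log γ),
      excess x (Real.exp t) < excess y (Real.exp t) := by
    rintro t (⟨h₁, h₂⟩ | ⟨h₁, h₂⟩)
    · exact hgap _ (Or.inl ⟨(Real.log_lt_iff_lt_exp hβ).1 h₁, (Real.lt_log_iff_exp_lt ha).1 h₂⟩)
    · exact hgap _ (Or.inr ⟨(Real.log_lt_iff_lt_exp hδ).1 h₁, (Real.lt_log_iff_exp_lt hγ).1 h₂⟩)
  have h₁' := Real.log_lt_log (by positivity) h₁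
  have h₂' := Real.log_lt_log (by positivity) h₂
  have hθδ' := Real.log_lt_log (by positivity) hθδ
  have hθa' := Real.log_lt_log hθ hθa
  rw [Real.log_mul (by positivity) (by positivity), Real.log_pow, Real.log_pow] at h₁' h₂'
  rw [Real.log_pow] at hθδ' hθa'
  push_cast at h₁' h₂' hθδ' hθa'
  rw [← Real.exp_log hθ]
  exact excess_tpow_lt_of_mem hx hy hxy m <| Set.add_subset_add_left hgap' <|
    Ioo_subset_nsmul_add hF (Real.log_lt_log hβ hβb) (Real.log_lt_log (hpos b (by simp)) hba)
      (Real.log_lt_log hδ hδc) (Real.log_lt_log (hpos c (by simp)) hcγ) m (by linarith)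
      (by linarith) ⟨hθδ', hθa'⟩

end gaps

section takeDrop

variable {n d : ℕ}

lemma sum_filter_lt_eq_sum_take (v : Fin n → ℝ) (h : d ≤ n) :
    ∑ i ∈ univ.filter (fun i : Fin n => (i : ℕ) < d), v i = ∑ i, take v d h i :=
  (sum_bij (fun i _ => Fin.castLE h i) (fun i _ => by simp)
    (fun _ _ _ _ hij => Fin.castLE_injective h hij)
    (fun j hj => ⟨⟨j, (mem_filter.1 hj).2⟩, mem_univ _, rfl⟩) fun _ _ => rfl).symm

lemma sum_filter_not_lt_eq_sum_drop (v : Fin n → ℝ) :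
    ∑ i ∈ univ.filter (fun i : Fin n => ¬ (i : ℕ) < d), v i = ∑ i, drop v d i :=
  (sum_bij (fun (i : Fin (n - d)) _ => (⟨d + i, by omega⟩ : Fin n)) (fun i _ => by simp)
    (fun _ _ _ _ hij => Fin.ext (by simpa using hij))
    (fun j hj => ⟨⟨j - d, by have := (mem_filter.1 hj).2; omega⟩, mem_univ _,
      Fin.ext (by have := (mem_filter.1 hj).2; simp; omega)⟩) fun _ _ => rfl).symm

lemma sum_take_add_sum_drop (v : Fin n → ℝ) (h : d ≤ n) :
    ∑ i, take v d h i + ∑ i, drop v d i = ∑ i, v i := by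
  rw [← sum_filter_lt_eq_sum_take v h, ← sum_filter_not_lt_eq_sum_drop,
    sum_filter_add_sum_filter_not]

lemma excess_take_add_excess_drop (v : Fin n → ℝ) (h : d ≤ n) (t : ℝ) :
    excess (take v d h) t + excess (drop v d) t = excess v t :=
  sum_take_add_sum_drop (fun i => max (v i - t) 0) h

variable {x y : Fin n → ℝ} (h : d ≤ n)

lemma sum_eq_of_SMaj_take_drop (htake : SMaj (take x d h) (take y d h))
    (hdrop : SMaj (drop x d) (drop y d)) : ∑ i, x i = ∑ i, y i := by
  rw [← sum_take_add_sum_drop x h, ← sum_take_add_sum_drop y h, htake.1, hdrop.1]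

lemma excess_le_of_SMaj_take_drop (htake : SMaj (take x d h) (take y d h))
    (hdrop : SMaj (drop x d) (drop y d)) (t : ℝ) : excess x t ≤ excess y t := by
  rw [← excess_take_add_excess_drop x h, ← excess_take_add_excess_drop y h]
  exact add_le_add (htake.excess_le t) (hdrop.excess_le t)

lemma excess_lt_of_SMaj_take_drop (htake : SMaj (take x d h) (take y d h))
    (hdrop : SMaj (drop x d) (drop y d)) {t : ℝ}
    (ht : ((∃ i, take y d h i < t) ∧ ∃ i, t < take y d h i) ∨
      ((∃ i, drop y d i < t) ∧ ∃ i, t < drop y d i)) : excess x t < excess y t := by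
  rw [← excess_take_add_excess_drop x h, ← excess_take_add_excess_drop y h]
  rcases ht with ⟨hlo, hhi⟩ | ⟨hlo, hhi⟩
  · exact add_lt_add_of_lt_of_le (htake.excess_lt hlo hhi) (hdrop.excess_le t)
  · exact add_lt_add_of_le_of_lt (htake.excess_le t) (hdrop.excess_lt hlo hhi)

end takeDrop

section necessity

lemma prod_le_mul_pow_pred {k : ℕ} {f : Fin k → ℝ} {a b : ℝ} (hf : ∀ j, 0 ≤ f j)
    (ha : ∀ j, f j ≤ a) {j₀ : Fin k} (hb : f j₀ ≤ b) : ∏ j, f j ≤ b * a ^ (k - 1) := by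
  rw [← mul_prod_erase univ f (mem_univ j₀)]
  have hcard : (univ.erase j₀).card = k - 1 := by simp
  refine mul_le_mul hb ?_ (prod_nonneg fun j _ => hf j) ((hf j₀).trans hb)
  simpa [hcard] using prod_le_prod (s := univ.erase j₀) (fun j _ => hf j) fun j _ => ha j

lemma mul_pow_pred_le_prod {k : ℕ} {f : Fin k → ℝ} {a b : ℝ} (ha₀ : 0 ≤ a) (hb₀ : 0 ≤ b)
    (ha : ∀ j, a ≤ f j) {j₀ : Fin k} (hb : b ≤ f j₀) : b * a ^ (k - 1) ≤ ∏ j, f j := by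
  rw [← mul_prod_erase univ f (mem_univ j₀)]
  have hcard : (univ.erase j₀).card = k - 1 := by simp
  refine mul_le_mul hb ?_ (pow_nonneg ha₀ _) (hb₀.trans hb)
  simpa [hcard] using prod_le_prod (s := univ.erase j₀) (fun _ _ => ha₀) fun j _ => ha j

variable {n d k : ℕ} {x y : Fin n → ℝ}

lemma not_SMaj_tpow_of_le_left (hy : Antitone y) (hy₀ : ∀ i, 0 ≤ y i) (hd : 0 < d)
    (hdn : d < n) (hk : 1 ≤ k) (hsum : ∑ i, take x d hdn.le i = ∑ i, take y d hdn.le i)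
    (h : y ⟨0, by omega⟩ ^ (k - 1) * y ⟨d, hdn⟩ ≤ y ⟨d - 1, by omega⟩ ^ k) :
    ¬ SMaj (tpow x k) (tpow y k) := by
  set S₀ := univ.filter fun i : Fin n => (i : ℕ) < d
  set S := (Fintype.piFinset fun _ : Fin k => S₀).map finFunctionFinEquiv.toEmbedding
  have hS₀ : S₀.card = d := by simp [S₀, Fin.card_filter_val_lt, hdn.le]
  have hS : S.card = d ^ k := by simp [S, Fintype.card_piFinset, hS₀]
  refine not_SMaj_of_le_of_le (S := S) (c := y ⟨d - 1, by omega⟩ ^ k) ?_ ?_ ?_ ?_ ?_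
  · rw [hS]; exact Nat.one_le_pow _ _ hd
  · rw [hS]; exact Nat.pow_lt_pow_left hdn (by omega)
  · intro m hm
    rw [mem_map_equiv, Fintype.mem_piFinset] at hm
    exact pow_le_tpow (hy₀ _) fun j => hy (Fin.le_def.2 (by
      have := (mem_filter.1 (hm j)).2
      dsimp only
      omega))
  · intro m hm
    rw [mem_map_equiv, Fintype.mem_piFinset] at hm
    push Not at hm
    obtain ⟨j₀, hj₀⟩ := hm
    refine (prod_le_mul_pow_pred (fun j => hy₀ _) (fun j => hy (Fin.le_def.2 (Nat.zero_le _)))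
      (j₀ := j₀) (hy (Fin.le_def.2 ?_))).trans (by linarith)
    simp only [S₀, mem_filter, mem_univ, true_and, not_lt] at hj₀
    exact hj₀
  · rw [sum_tpow_map_piFinset, sum_tpow_map_piFinset, sum_filter_lt_eq_sum_take _ hdn.le,
      sum_filter_lt_eq_sum_take _ hdn.le, hsum]

lemma not_SMaj_tpow_of_le_right (hy : Antitone y) (hy₀ : ∀ i, 0 ≤ y i) (hd : 0 < d)
    (hdn : d < n) (hk : 1 ≤ k) (hsum : ∑ i, x i = ∑ i, y i)
    (hdrop : ∑ i, drop x d i = ∑ i, drop y d i)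
    (h : y ⟨d, hdn⟩ ^ k ≤ y ⟨d - 1, by omega⟩ * y ⟨n - 1, by omega⟩ ^ (k - 1)) :
    ¬ SMaj (tpow x k) (tpow y k) := by
  set S₀ := univ.filter fun i : Fin n => ¬ (i : ℕ) < d
  set T := (Fintype.piFinset fun _ : Fin k => S₀).map finFunctionFinEquiv.toEmbedding
  have hS₀ : S₀.card = n - d := by
    have := card_filter_add_card_filter_not (s := univ) (fun i : Fin n => (i : ℕ) < d)
    simp [Fin.card_filter_val_lt, hdn.le] at this
    simp [S₀]; omega
  have hT : T.card = (n - d) ^ k := by simp [T, Fintype.card_piFinset, hS₀]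
  have hTn : (n - d) ^ k < n ^ k := Nat.pow_lt_pow_left (by omega) (by omega)
  have hcard : (univ \ T).card = n ^ k - (n - d) ^ k := by
    rw [card_sdiff_of_subset T.subset_univ, hT, card_univ, Fintype.card_fin]
  have := Nat.one_le_pow k (n - d) (by omega)
  refine not_SMaj_of_le_of_le (S := univ \ T)
    (c := y ⟨d - 1, by omega⟩ * y ⟨n - 1, by omega⟩ ^ (k - 1)) (by omega) (by omega) ?_ ?_ ?_
  · intro m hm
    rw [mem_sdiff, mem_map_equiv, Fintype.mem_piFinset] at hm
    push Not at hm
    obtain ⟨j₀, hj₀⟩ := hm.2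
    refine mul_pow_pred_le_prod (hy₀ _) (hy₀ _) (fun j => hy (Fin.le_def.2 ?_)) (j₀ := j₀)
      (hy (Fin.le_def.2 ?_))
    · have := (finFunctionFinEquiv.symm m j).isLt
      dsimp only
      omega
    · simp only [S₀, mem_filter, mem_univ, true_and, not_not] at hj₀
      dsimp only
      omega
  · intro m hm
    rw [mem_sdiff, not_and, not_not, mem_map_equiv, Fintype.mem_piFinset] at hm
    refine le_trans ?_ h
    exact tpow_le_pow hy₀ fun j => hy (Fin.le_def.2 (by
      have := hm (mem_univ _) j
      simp only [S₀, mem_filter, mem_univ, true_and, not_lt] at this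
      exact this))
  · rw [sum_sdiff_eq_sub T.subset_univ, sum_sdiff_eq_sub T.subset_univ, sum_tpow, sum_tpow,
      sum_tpow_map_piFinset, sum_tpow_map_piFinset, sum_filter_not_lt_eq_sum_drop,
      sum_filter_not_lt_eq_sum_drop, hsum, hdrop]

end necessity

section sufficiency

variable {n d m : ℕ} {x y : Fin n → ℝ}

lemma SMaj_tpow_of_lt (hd : 1 < d) (hdn : d + 1 < n) (hxa : Antitone x) (hya : Antitone y)
    (hy : ∀ i, 0 < y i) (htake : SMaj (take x d (by omega)) (take y d (by omega)))
    (hdrop : SMaj (drop x d) (drop y d))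
    (h₁ : y ⟨d - 1, by omega⟩ ^ (m + 1) < y ⟨0, by omega⟩ ^ m * y ⟨d, by omega⟩)
    (h₂ : y ⟨d - 1, by omega⟩ * y ⟨n - 1, by omega⟩ ^ m < y ⟨d, by omega⟩ ^ (m + 1)) :
    SMaj (tpow x (m + 1)) (tpow y (m + 1)) := by
  have hdn' : d ≤ n := by omega
  have hy' : Antitone (take y d hdn') := fun _ _ hij => hya hij
  have hy'' : Antitone (drop y d) := fun _ _ hij => hya (Nat.add_le_add_left hij d)
  have hdrop_last : ∀ v : Fin n → ℝ, drop v d ⟨n - d - 1, by omega⟩ = v ⟨n - 1, by omega⟩ :=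
    fun v => congrArg v (Fin.ext (by simp; omega))
  have hx0 : x ⟨0, by omega⟩ < y ⟨0, by omega⟩ := htake.head_lt hy' hd
  have hxd₁ : y ⟨d - 1, by omega⟩ < x ⟨d - 1, by omega⟩ := htake.last_lt hy' hd
  have hxd : x ⟨d, by omega⟩ < y ⟨d, by omega⟩ := hdrop.head_lt hy'' (by omega)
  have hxn : y ⟨n - 1, by omega⟩ < x ⟨n - 1, by omega⟩ := by
    simpa only [hdrop_last] using hdrop.last_lt hy'' (by omega)
  have hxpos : ∀ i, 0 < x i := fun i =>
    (hy _).trans (hxn.trans_le (hxa (Fin.le_def.2 (by dsimp only; omega))))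
  have hxy := excess_le_of_SMaj_take_drop hdn' htake hdrop
  refine SMaj_of_excess_lt (by rw [sum_tpow, sum_tpow, sum_eq_of_SMaj_take_drop hdn' htake hdrop])
    (excess_tpow_le hxpos hy hxy _) ?_
  rintro θ ⟨i, hi⟩ ⟨j, hj⟩
  refine excess_tpow_lt hxpos hy hxy (a := y ⟨0, by omega⟩) (β := y ⟨d - 1, by omega⟩)
    (b := x ⟨d - 1, by omega⟩) (γ := y ⟨d, by omega⟩) (δ := y ⟨n - 1, by omega⟩)
    (c := x ⟨d, by omega⟩) ?_ hxd₁ ((hxa (Fin.le_def.2 (Nat.zero_le _))).trans_lt hx0)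
    (hxn.trans_le (hxa (Fin.le_def.2 (by dsimp only; omega)))) hxd ?_ m h₁ h₂ ?_ ?_
  · intro z hz
    simp only [Set.mem_insert_iff, Set.mem_singleton_iff] at hz
    rcases hz with rfl | rfl | rfl | rfl | rfl | rfl <;> simp
  · rintro t (⟨htl, htr⟩ | ⟨htl, htr⟩)
    · exact excess_lt_of_SMaj_take_drop hdn' htake hdrop
        (Or.inl ⟨⟨⟨d - 1, by omega⟩, htl⟩, ⟨⟨0, by omega⟩, htr⟩⟩)
    · exact excess_lt_of_SMaj_take_drop hdn' htake hdrop
        (Or.inr ⟨⟨⟨n - d - 1, by omega⟩, (hdrop_last y).symm ▸ htl⟩, ⟨⟨0, by omega⟩, htr⟩⟩)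
  · exact (pow_lt_pow_left₀ hxn (hy _).le (by omega)).trans_le
      ((pow_le_tpow (hxpos _).le fun _ => hxa (Fin.le_def.2 (by dsimp only; omega))).trans hi)
  · exact (hj.trans (tpow_le_pow (fun i => (hxpos i).le)
      fun _ => hxa (Fin.le_def.2 (Nat.zero_le _)))).trans_lt
      (pow_lt_pow_left₀ hx0 (hxpos _).le (by omega))

end sufficiency

/-- Lemma 13 of the paper. For `x ∈ K_d(y)` (nonempty since
`y_1 > y_d` and `y_{d+1} > y_n`): `x^{⊗k} ◁ y^{⊗k}` iff
`y_d^k < y_1^{k-1} y_{d+1}` and `y_{d+1}^k > y_d y_n^{k-1}` (1-based indices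
in the informal statement, 0-based here). -/
theorem stmt17 {n : ℕ} (d k : ℕ) (hd1 : 1 < d) (hd2 : d + 1 < n) (hk : 1 ≤ k)
    (y : Fin n → ℝ) (hy : y ∈ Vn n) (hypos : ∀ i, 0 < y i) :
    ∀ x ∈ Kd y d (by omega),
      (SMaj (tpow x k) (tpow y k) ↔
        (y ⟨d - 1, by omega⟩ ^ k < y ⟨0, by omega⟩ ^ (k - 1) * y ⟨d, by omega⟩ ∧
         y ⟨d, by omega⟩ ^ k > y ⟨d - 1, by omega⟩ * y ⟨n - 1, by omega⟩ ^ (k - 1))) := by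
  rintro x ⟨⟨-, -, hxa⟩, htake, hdrop⟩
  obtain ⟨-, -, hya⟩ := hy
  have hy₀ : ∀ i, 0 ≤ y i := fun i => (hypos i).le
  refine ⟨fun h => ⟨lt_of_not_ge fun h₁ => ?_, lt_of_not_ge fun h₂ => ?_⟩, fun ⟨h₁, h₂⟩ => ?_⟩
  · exact not_SMaj_tpow_of_le_left hya hy₀ (by omega) (by omega) hk htake.1 h₁ h
  · exact not_SMaj_tpow_of_le_right hya hy₀ (by omega) (by omega) hk
      (sum_eq_of_SMaj_take_drop (by omega) htake hdrop) hdrop.1 h₂ h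
  · obtain ⟨m, rfl⟩ := Nat.exists_eq_add_of_le' hk
    exact SMaj_tpow_of_lt hd1 hd2 hxa hya hypos htake hdrop (by simpa using h₁) (by simpa using h₂)
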